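/- Let κ ∈ (4,6]. Define G : 𝒳₂ → ℝ by G(θ₁,θ₂) = (sin((θ₂−θ₁)/2))^(1−6/κ) · (sin((θ₂−θ₁)/4))^(8/κ−1). Then G is positive on 𝒳₂ and satisfies the radial BPZ system with constant ℵ = (16−κ²)/(32κ); that is, for each j ∈ {1,2}, with ℓ the other index, (κ/2)·∂ⱼ²G(θ₁,θ₂) + cot((θ_ℓ−θ_j)/2)·∂_ℓG(θ₁,θ₂) − ((6−κ)/(4κ))·G(θ₁,θ₂)/sin²((θ_ℓ−θ_j)/2) = ((16−κ²)/(32κ))·G(θ₁,θ₂) on 𝒳₂. -/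

import Mathlib

/-
Since `G` depends only on `x = θ₂ - θ₁`, with `∂₁ = -∂₂` on such functions, and `cot` is odd while
`sin²` is even, both BPZ equations reduce to one ODE in `x ∈ (0, 2π)`. Writing `G' = G · L` with the
logarithmic derivative `L = a/2 · cot(x/2) + b/4 · cot(x/4)`, we get `G'' = G · (L² + L')`, so after
dividing by `G > 0` the ODE becomes a Riccati identity for `L`. In terms of `sin(x/4)` and
`cos(x/4)` it is a rational identity modulo `sin² + cos² = 1`, which holds for the exponents
`a = 1 - 6/κ`, `b = 8/κ - 1`.
-/

open Real Set

/-- First partial derivative of `Z` in its first variable. -/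
noncomputable def pderiv1 (Z : ℝ → ℝ → ℝ) (θ₁ θ₂ : ℝ) : ℝ :=
  deriv (fun s => Z s θ₂) θ₁

/-- First partial derivative of `Z` in its second variable. -/
noncomputable def pderiv2 (Z : ℝ → ℝ → ℝ) (θ₁ θ₂ : ℝ) : ℝ :=
  deriv (fun s => Z θ₁ s) θ₂

/-- Second partial derivative of `Z` in its first variable. -/
noncomputable def pderiv11 (Z : ℝ → ℝ → ℝ) (θ₁ θ₂ : ℝ) : ℝ :=
  deriv (fun s => pderiv1 Z s θ₂) θ₁

/-- Second partial derivative of `Z` in its second variable. -/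
noncomputable def pderiv22 (Z : ℝ → ℝ → ℝ) (θ₁ θ₂ : ℝ) : ℝ :=
  deriv (fun s => pderiv2 Z θ₁ s) θ₂

/-- `Z` satisfies the radial BPZ system with constant `ℵ` on
`𝒳₂ = {(θ₁, θ₂) : θ₁ < θ₂ < θ₁ + 2π}`. -/
def RadialBPZ₂ (κ ℵ : ℝ) (Z : ℝ → ℝ → ℝ) : Prop :=
  ∀ θ₁ θ₂ : ℝ, θ₁ < θ₂ → θ₂ < θ₁ + 2 * π →
    (κ / 2 * pderiv11 Z θ₁ θ₂ + Real.cot ((θ₂ - θ₁) / 2) * pderiv2 Z θ₁ θ₂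
        - (6 - κ) / (4 * κ) * Z θ₁ θ₂ / Real.sin ((θ₂ - θ₁) / 2) ^ 2
      = ℵ * Z θ₁ θ₂)
    ∧ (κ / 2 * pderiv22 Z θ₁ θ₂ + Real.cot ((θ₁ - θ₂) / 2) * pderiv1 Z θ₁ θ₂
        - (6 - κ) / (4 * κ) * Z θ₁ θ₂ / Real.sin ((θ₁ - θ₂) / 2) ^ 2
      = ℵ * Z θ₁ θ₂)

open Topology

lemma Real.cot_neg (x : ℝ) : cot (-x) = -cot x := by
  rw [cot_eq_cos_div_sin, cot_eq_cos_div_sin, cos_neg, sin_neg, div_neg]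

lemma Real.hasDerivAt_cot {x : ℝ} (hx : sin x ≠ 0) : HasDerivAt cot (-1 / sin x ^ 2) x := by
  rw [show (cot : ℝ → ℝ) = fun y => cos y / sin y from funext cot_eq_cos_div_sin]
  refine ((hasDerivAt_cos x).fun_div (hasDerivAt_sin x) hx).congr_deriv ?_
  rw [← sin_sq_add_cos_sq x]
  ring

section
variable {f f' f'' : ℝ → ℝ} {U : Set ℝ} {θ₁ θ₂ : ℝ}

lemma pderiv1_comp_sub (hf : HasDerivAt f (f' (θ₂ - θ₁)) (θ₂ - θ₁)) :
    pderiv1 (fun s t => f (t - s)) θ₁ θ₂ = -f' (θ₂ - θ₁) :=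
  (hf.comp_const_sub θ₂ θ₁).deriv

lemma pderiv2_comp_sub (hf : HasDerivAt f (f' (θ₂ - θ₁)) (θ₂ - θ₁)) :
    pderiv2 (fun s t => f (t - s)) θ₁ θ₂ = f' (θ₂ - θ₁) :=
  (hf.comp_sub_const θ₂ θ₁).deriv

variable (hU : IsOpen U) (hf : ∀ x ∈ U, HasDerivAt f (f' x) x)
  (hf' : ∀ x ∈ U, HasDerivAt f' (f'' x) x)
include hU hf hf'

lemma pderiv11_comp_sub (hx : θ₂ - θ₁ ∈ U) :
    pderiv11 (fun s t => f (t - s)) θ₁ θ₂ = f'' (θ₂ - θ₁) := by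
  have hnhds : {s | θ₂ - s ∈ U} ∈ 𝓝 θ₁ :=
    (hU.preimage (continuous_const.sub continuous_id)).mem_nhds hx
  have heq : (fun s => pderiv1 (fun s t => f (t - s)) s θ₂) =ᶠ[𝓝 θ₁] fun s => -f' (θ₂ - s) :=
    Filter.mem_of_superset hnhds fun s hs => pderiv1_comp_sub (hf _ hs)
  rw [pderiv11, heq.deriv_eq]
  simpa using ((hf' _ hx).comp_const_sub θ₂ θ₁).neg.deriv

lemma pderiv22_comp_sub (hx : θ₂ - θ₁ ∈ U) :
    pderiv22 (fun s t => f (t - s)) θ₁ θ₂ = f'' (θ₂ - θ₁) := by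
  have hnhds : {t | t - θ₁ ∈ U} ∈ 𝓝 θ₂ :=
    (hU.preimage (continuous_id.sub continuous_const)).mem_nhds hx
  have heq : (fun t => pderiv2 (fun s t => f (t - s)) θ₁ t) =ᶠ[𝓝 θ₂] fun t => f' (t - θ₁) :=
    Filter.mem_of_superset hnhds fun t ht => pderiv2_comp_sub (hf _ ht)
  rw [pderiv22, heq.deriv_eq]
  exact ((hf' _ hx).comp_sub_const θ₂ θ₁).deriv

end

theorem radialBPZ₂_comp_sub {κ ℵ : ℝ} {f f' f'' : ℝ → ℝ}
    (hf : ∀ x ∈ Ioo 0 (2 * π), HasDerivAt f (f' x) x)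
    (hf' : ∀ x ∈ Ioo 0 (2 * π), HasDerivAt f' (f'' x) x)
    (hode : ∀ x ∈ Ioo 0 (2 * π),
      κ / 2 * f'' x + cot (x / 2) * f' x - (6 - κ) / (4 * κ) * f x / sin (x / 2) ^ 2 = ℵ * f x) :
    RadialBPZ₂ κ ℵ (fun s t => f (t - s)) := by
  intro θ₁ θ₂ h₁ h₂
  have hx : θ₂ - θ₁ ∈ Ioo 0 (2 * π) := ⟨by linarith, by linarith⟩
  have hsymm : (θ₁ - θ₂) / 2 = -((θ₂ - θ₁) / 2) := by ring
  constructor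
  · rw [pderiv11_comp_sub isOpen_Ioo hf hf' hx, pderiv2_comp_sub (hf _ hx)]
    exact hode _ hx
  · rw [pderiv22_comp_sub isOpen_Ioo hf hf' hx, pderiv1_comp_sub (hf _ hx), hsymm, cot_neg,
      sin_neg]
    linear_combination hode _ hx

noncomputable def radialProfile (a b x : ℝ) : ℝ :=
  sin (x / 2) ^ a * sin (x / 4) ^ b

noncomputable def radialProfileLogDeriv (a b x : ℝ) : ℝ :=
  a / 2 * cot (x / 2) + b / 4 * cot (x / 4)

section
variable {a b x : ℝ}

lemma hasDerivAt_radialProfile (hS : sin (x / 2) ≠ 0) (hT : sin (x / 4) ≠ 0) :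
    HasDerivAt (radialProfile a b) (radialProfile a b x * radialProfileLogDeriv a b x) x := by
  have h2 := ((hasDerivAt_id x).div_const 2).sin.rpow_const (p := a) (Or.inl hS)
  have h4 := ((hasDerivAt_id x).div_const 4).sin.rpow_const (p := b) (Or.inl hT)
  refine (h2.mul h4).congr_deriv ?_
  simp only [radialProfile, radialProfileLogDeriv, cot_eq_cos_div_sin, rpow_sub_one hS,
    rpow_sub_one hT, id]
  field_simp

lemma hasDerivAt_radialProfileLogDeriv (hS : sin (x / 2) ≠ 0) (hT : sin (x / 4) ≠ 0) :
    HasDerivAt (radialProfileLogDeriv a b)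
      (-(a / 4) / sin (x / 2) ^ 2 - b / 16 / sin (x / 4) ^ 2) x := by
  have h2 := (hasDerivAt_cot hS).comp x ((hasDerivAt_id x).div_const 2)
  have h4 := (hasDerivAt_cot hT).comp x ((hasDerivAt_id x).div_const 4)
  refine ((h2.const_mul (a / 2)).add (h4.const_mul (b / 4))).congr_deriv ?_
  ring

end

lemma radialProfileLogDeriv_riccati {κ x : ℝ} (hκ : κ ≠ 0) (hS : sin (x / 2) ≠ 0) :
    κ / 2 * (radialProfileLogDeriv (1 - 6 / κ) (8 / κ - 1) x ^ 2
        + (-((1 - 6 / κ) / 4) / sin (x / 2) ^ 2 - (8 / κ - 1) / 16 / sin (x / 4) ^ 2))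
      + cot (x / 2) * radialProfileLogDeriv (1 - 6 / κ) (8 / κ - 1) x
      - (6 - κ) / (4 * κ) / sin (x / 2) ^ 2 = (16 - κ ^ 2) / (32 * κ) := by
  have hdouble : x / 2 = 2 * (x / 4) := by ring
  rw [hdouble, sin_two_mul] at hS
  have hT : sin (x / 4) ≠ 0 := by rintro h; simp [h] at hS
  have hC : cos (x / 4) ≠ 0 := by rintro h; simp [h] at hS
  simp only [radialProfileLogDeriv, cot_eq_cos_div_sin, hdouble, sin_two_mul, cos_two_mul]
  field_simp
  linear_combination
    (8192 * κ ^ 2 * cos (x / 4) ^ 2 - 131072 * cos (x / 4) ^ 2) * sin_sq_add_cos_sq (x / 4)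

lemma sin_half_pos_and_sin_quarter_pos {x : ℝ} (hx : x ∈ Ioo 0 (2 * π)) :
    0 < sin (x / 2) ∧ 0 < sin (x / 4) :=
  ⟨sin_pos_of_pos_of_lt_pi (by linarith [hx.1]) (by linarith [hx.2]),
    sin_pos_of_pos_of_lt_pi (by linarith [hx.1]) (by linarith [hx.2, pi_pos])⟩

theorem stmt1_general (κ : ℝ) (hκ4 : 4 < κ)
    (G : ℝ → ℝ → ℝ)
    (hG : ∀ θ₁ θ₂ : ℝ, G θ₁ θ₂
      = Real.sin ((θ₂ - θ₁) / 2) ^ (1 - 6 / κ) * Real.sin ((θ₂ - θ₁) / 4) ^ (8 / κ - 1)) :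
    (∀ θ₁ θ₂ : ℝ, θ₁ < θ₂ → θ₂ < θ₁ + 2 * π → 0 < G θ₁ θ₂)
    ∧ RadialBPZ₂ κ ((16 - κ ^ 2) / (32 * κ)) G := by
  set f := radialProfile (1 - 6 / κ) (8 / κ - 1)
  set L := radialProfileLogDeriv (1 - 6 / κ) (8 / κ - 1)
  obtain rfl : G = fun s t => f (t - s) := funext₂ hG
  have hf : ∀ x ∈ Ioo 0 (2 * π), HasDerivAt f (f x * L x) x := fun x hx =>
    have hS := sin_half_pos_and_sin_quarter_pos hx
    hasDerivAt_radialProfile hS.1.ne' hS.2.ne'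
  have hf' : ∀ x ∈ Ioo 0 (2 * π), HasDerivAt (fun x => f x * L x) (f x * (L x ^ 2
      + (-((1 - 6 / κ) / 4) / sin (x / 2) ^ 2 - (8 / κ - 1) / 16 / sin (x / 4) ^ 2))) x := by
    intro x hx
    have hS := sin_half_pos_and_sin_quarter_pos hx
    refine ((hf x hx).mul (hasDerivAt_radialProfileLogDeriv hS.1.ne' hS.2.ne')).congr_deriv ?_
    ring
  refine ⟨fun θ₁ θ₂ h₁ h₂ => ?_, radialBPZ₂_comp_sub hf hf' fun x hx => ?_⟩
  · have hS := sin_half_pos_and_sin_quarter_pos (x := θ₂ - θ₁) ⟨by linarith, by linarith⟩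
    exact mul_pos (rpow_pos_of_pos hS.1 _) (rpow_pos_of_pos hS.2 _)
  · have hS := (sin_half_pos_and_sin_quarter_pos hx).1.ne'
    linear_combination f x * radialProfileLogDeriv_riccati (by positivity) hS

/-- for `κ ∈ (4,6]`, the function
`G(θ₁,θ₂) = (sin((θ₂−θ₁)/2))^(1−6/κ) · (sin((θ₂−θ₁)/4))^(8/κ−1)` is positive on `𝒳₂` and
satisfies the radial BPZ system with constant `ℵ = (16−κ²)/(32κ)`. -/
theorem stmt1 (κ : ℝ) (hκ4 : 4 < κ) (hκ6 : κ ≤ 6)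
    (G : ℝ → ℝ → ℝ)
    (hG : ∀ θ₁ θ₂ : ℝ, G θ₁ θ₂
      = Real.sin ((θ₂ - θ₁) / 2) ^ (1 - 6 / κ) * Real.sin ((θ₂ - θ₁) / 4) ^ (8 / κ - 1)) :
    (∀ θ₁ θ₂ : ℝ, θ₁ < θ₂ → θ₂ < θ₁ + 2 * π → 0 < G θ₁ θ₂)
    ∧ RadialBPZ₂ κ ((16 - κ ^ 2) / (32 * κ)) G :=
  stmt1_general κ hκ4 G hG
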